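/- The Perron–Frobenius operator P preserves the set C₀: if f : (0,1] → ℝ is nonnegative, decreasing and continuous on (0,1/2] and on (1/2,1], and integrable with respect to Lebesgue measure, then Pf is also nonnegative, decreasing and continuous on (0,1/2] and on (1/2,1], and integrable. -/

import Mathlib

open MeasureTheory Set

/-- Left branch of the LSV-type maps: `x ↦ x(1 + 2^α x^α)`. -/
noncomputable def lsvLeft (α x : ℝ) : ℝ := x * (1 + 2 ^ α * x ^ α)

/-- The LSV map `S_α`. -/
noncomputable def lsvMap (α : ℝ) (x : ℝ) : ℝ :=
  if x ≤ 1 / 2 then lsvLeft α x else 2 * x - 1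

/-- The map `R_{α,K}`. -/
noncomputable def rMap (α K : ℝ) (x : ℝ) : ℝ :=
  if x ≤ 1 / 2 then lsvLeft α x
  else 1 / 2 + K * (x - 1 / 2) + 2 * (1 - K) * (x - 1 / 2) ^ 2

/-- The Perron–Frobenius operator `P` of the random system, written in terms of
the inverse `y j` of the left branch of `T j`, the inverse `zr r` of the right
branch of `T r` (for `r ∈ SR`), and `z(x) = (x+1)/2`.  Here
`ξ_j(x) = (2 y_j(x))^{α_j}` and `DR_r(u) = K_r + 4(1-K_r)(u - 1/2)`. -/
noncomputable def PFop {N : ℕ} (SR : Finset (Fin N)) (p α K : Fin N → ℝ)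
    (y zr : Fin N → ℝ → ℝ) (f : ℝ → ℝ) (x : ℝ) : ℝ :=
  (∑ j, p j * (f (y j x) / (1 + (α j + 1) * (2 * y j x) ^ (α j))))
    + (∑ j ∈ SRᶜ, p j) * (f ((x + 1) / 2) / 2)
    + if 1 / 2 < x then
        ∑ r ∈ SR, p r * (f (zr r x) / (K r + 4 * (1 - K r) * (zr r x - 1 / 2)))
      else 0

/-- Membership of the set `C₀`: nonnegative, decreasing and continuous on
`(0,1/2]` and on `(1/2,1]`, and Lebesgue integrable. -/
def memC0 (f : ℝ → ℝ) : Prop :=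
  (∀ x ∈ Set.Ioc (0 : ℝ) 1, 0 ≤ f x) ∧
  AntitoneOn f (Set.Ioc (0 : ℝ) (1 / 2)) ∧
  ContinuousOn f (Set.Ioc (0 : ℝ) (1 / 2)) ∧
  AntitoneOn f (Set.Ioc (1 / 2 : ℝ) 1) ∧
  ContinuousOn f (Set.Ioc (1 / 2 : ℝ) 1) ∧
  MeasureTheory.IntegrableOn f (Set.Ioc (0 : ℝ) 1)



private lemma lsv_le {α a b : ℝ} (hα : 0 < α) (ha : 0 ≤ a) (hab : a ≤ b) :
    lsvLeft α a ≤ lsvLeft α b := by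
  have hb : 0 ≤ b := ha.trans hab
  have h1 : a ^ α ≤ b ^ α := Real.rpow_le_rpow ha hab hα.le
  have h2 : (0:ℝ) < 2 ^ α := Real.rpow_pos_of_pos two_pos α
  have h3 : 0 ≤ b ^ α := Real.rpow_nonneg hb α
  have h4 := mul_le_mul_of_nonneg_left h1 h2.le
  unfold lsvLeft
  have h5 : 0 ≤ 2 ^ α * b ^ α := mul_nonneg h2.le h3
  have step1 : a * (1 + 2 ^ α * a ^ α) ≤ a * (1 + 2 ^ α * b ^ α) :=
    mul_le_mul_of_nonneg_left (by linarith) ha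
  have step2 : a * (1 + 2 ^ α * b ^ α) ≤ b * (1 + 2 ^ α * b ^ α) :=
    mul_le_mul_of_nonneg_right hab (by linarith)
  linarith

private lemma lsv_lt {α a b : ℝ} (hα : 0 < α) (ha : 0 ≤ a) (hab : a < b) :
    lsvLeft α a < lsvLeft α b := by
  have hb : 0 < b := ha.trans_lt hab
  have h1 : a ^ α ≤ b ^ α := Real.rpow_le_rpow ha hab.le hα.le
  have h2 : (0:ℝ) < 2 ^ α := Real.rpow_pos_of_pos two_pos α
  have h3 : 0 ≤ b ^ α := Real.rpow_nonneg hb.le α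
  have h4 := mul_le_mul_of_nonneg_left h1 h2.le
  unfold lsvLeft
  have h5 : 0 ≤ 2 ^ α * b ^ α := mul_nonneg h2.le h3
  have step1 : a * (1 + 2 ^ α * a ^ α) ≤ a * (1 + 2 ^ α * b ^ α) :=
    mul_le_mul_of_nonneg_left (by linarith) ha
  have step2 : a * (1 + 2 ^ α * b ^ α) < b * (1 + 2 ^ α * b ^ α) :=
    mul_lt_mul_of_pos_right hab (by linarith)
  linarith

private lemma lsv_zero (α : ℝ) : lsvLeft α 0 = 0 := by simp [lsvLeft]

private lemma lsv_half {α : ℝ} (hα : 0 < α) : lsvLeft α (1/2) = 1 := by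
  unfold lsvLeft
  have : (2:ℝ) ^ α * (1/2 : ℝ) ^ α = 1 := by
    rw [← Real.mul_rpow (by norm_num) (by norm_num)]
    norm_num
  rw [this]; norm_num

private lemma lsv_le_two_mul {α x : ℝ} (hα : 0 < α) (h0 : 0 ≤ x) (h2 : x ≤ 1/2) :
    lsvLeft α x ≤ 2 * x := by
  have h1 : (2:ℝ) ^ α * x ^ α = (2*x) ^ α := (Real.mul_rpow (by norm_num) h0).symm
  have h3 : (2*x : ℝ) ^ α ≤ 1 := Real.rpow_le_one (by linarith) (by linarith) hα.le
  have h4 : (0:ℝ) ≤ (2*x : ℝ) ^ α := Real.rpow_nonneg (by linarith) α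
  unfold lsvLeft
  rw [h1]
  nlinarith

private lemma y_props {α : ℝ} (hα : 0 < α) {v : ℝ → ℝ}
    (hv : ∀ x ∈ Icc (0:ℝ) 1, v x ∈ Icc (0:ℝ) (1/2) ∧ lsvLeft α (v x) = x) :
    StrictMonoOn v (Icc 0 1) ∧ ContinuousOn v (Icc 0 1) ∧
      (∀ x ∈ Ioc (0:ℝ) 1, v x ∈ Ioc (0:ℝ) (1/2) ∧ x / 2 ≤ v x) := by
  have hmono : StrictMonoOn v (Icc 0 1) := by
    intro a ha b hb hab
    by_contra h
    push_neg at h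
    have h1 : lsvLeft α (v b) ≤ lsvLeft α (v a) := by
      rcases eq_or_lt_of_le h with h' | h'
      · rw [h']
      · exact (lsv_lt hα (hv b hb).1.1 h').le
    rw [(hv a ha).2, (hv b hb).2] at h1
    exact absurd h1 (not_le.2 hab)
  have hv0 : v 0 = 0 := by
    have h := hv 0 ⟨le_refl _, by norm_num⟩
    by_contra hne
    have hpos : 0 < v 0 := lt_of_le_of_ne h.1.1 (Ne.symm hne)
    have := lsv_lt hα le_rfl hpos
    rw [lsv_zero, h.2] at this
    exact absurd this (lt_irrefl 0)
  have hv1 : v 1 = 1/2 := by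
    have h := hv 1 ⟨by norm_num, le_refl _⟩
    by_contra hne
    have hlt : v 1 < 1/2 := lt_of_le_of_ne h.1.2 hne
    have := lsv_lt hα h.1.1 hlt
    rw [h.2, lsv_half hα] at this
    exact absurd this (lt_irrefl 1)
  have hsurj : ∀ t ∈ Icc (0:ℝ) (1/2), ∃ c ∈ Icc (0:ℝ) 1, v c = t := by
    intro t ht
    have hc0 : 0 ≤ lsvLeft α t := by
      have := lsv_le hα (le_refl (0:ℝ)) ht.1
      rwa [lsv_zero] at this
    have hc1 : lsvLeft α t ≤ 1 := by
      have := lsv_le hα ht.1 ht.2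
      rwa [lsv_half hα] at this
    refine ⟨lsvLeft α t, ⟨hc0, hc1⟩, ?_⟩
    have h := hv (lsvLeft α t) ⟨hc0, hc1⟩
    rcases lt_trichotomy (v (lsvLeft α t)) t with h' | h' | h'
    · have := lsv_lt hα h.1.1 h'
      rw [h.2] at this
      exact absurd this (lt_irrefl _)
    · exact h'
    · have := lsv_lt hα ht.1 h'
      rw [h.2] at this
      exact absurd this (lt_irrefl _)
  have hcont : ContinuousOn v (Icc 0 1) := by
    intro a ha
    have hright : a < 1 → ContinuousWithinAt v (Ici a) a := by
      intro ha1
      refine hmono.continuousWithinAt_right_of_exists_between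
        (Icc_mem_nhdsGE_of_mem ⟨ha.1, ha1⟩) ?_
      intro b hb
      have hva : v a < 1/2 := by
        have := hmono ha ⟨by norm_num, le_refl (1:ℝ)⟩ ha1
        rwa [hv1] at this
      have hva0 : 0 ≤ v a := (hv a ha).1.1
      obtain ⟨c, hc, hvc⟩ := hsurj (min b (1/2))
        ⟨le_min (hva0.trans hb.le) (by norm_num), min_le_right _ _⟩
      exact ⟨c, hc, by rw [hvc]; exact ⟨lt_min hb hva, min_le_left _ _⟩⟩
    have hleft : 0 < a → ContinuousWithinAt v (Iic a) a := by
      intro ha0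
      refine hmono.continuousWithinAt_left_of_exists_between
        (Icc_mem_nhdsLE_of_mem ⟨ha0, ha.2⟩) ?_
      intro b hb
      have hva : 0 < v a := by
        have := hmono ⟨le_refl (0:ℝ), by norm_num⟩ ha ha0
        rwa [hv0] at this
      obtain ⟨c, hc, hvc⟩ := hsurj (max b 0)
        ⟨le_max_right _ _, max_le (hb.le.trans (hv a ha).1.2) (by norm_num)⟩
      exact ⟨c, hc, by rw [hvc]; exact ⟨le_max_left _ _, max_lt hb hva⟩⟩
    by_cases h1 : a < 1
    · by_cases h0 : 0 < a
      · exact (((hright h1).union (hleft h0)).mono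
          (fun x _ => (le_total a x).imp id id)).mono (fun x _ => trivial)
      · have ha0 : a = 0 := le_antisymm (not_lt.1 h0) ha.1
        exact (hright h1).mono (fun x hx => ha0 ▸ hx.1)
    · have ha1 : a = 1 := le_antisymm ha.2 (not_lt.1 h1)
      exact (hleft (by rw [ha1]; norm_num)).mono (fun x hx => ha1 ▸ hx.2)
  refine ⟨hmono, hcont, ?_⟩
  intro x hx
  have h := hv x ⟨hx.1.le, hx.2⟩
  have hpos : 0 < v x := by
    by_contra hc
    push_neg at hc
    have : v x = 0 := le_antisymm hc h.1.1
    rw [← h.2, this, lsv_zero] at hx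
    exact absurd hx.1 (lt_irrefl 0)
  refine ⟨⟨hpos, h.1.2⟩, ?_⟩
  have := lsv_le_two_mul hα h.1.1 h.1.2
  rw [h.2] at this
  linarith

private lemma rb_le {Kc a b : ℝ} (hK0 : 0 < Kc) (hK1 : Kc < 1) (ha : 1/2 ≤ a) (hab : a ≤ b) :
    1/2 + Kc * (a - 1/2) + 2*(1-Kc)*(a - 1/2)^2 ≤ 1/2 + Kc * (b - 1/2) + 2*(1-Kc)*(b - 1/2)^2 := by
  nlinarith [mul_nonneg (mul_nonneg (by linarith : (0:ℝ) ≤ 1-Kc) (by linarith : (0:ℝ) ≤ b - a))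
      (by linarith : (0:ℝ) ≤ a + b - 1),
    mul_nonneg hK0.le (by linarith : (0:ℝ) ≤ b - a)]

private lemma rb_lt {Kc a b : ℝ} (hK0 : 0 < Kc) (hK1 : Kc < 1) (ha : 1/2 ≤ a) (hab : a < b) :
    1/2 + Kc * (a - 1/2) + 2*(1-Kc)*(a - 1/2)^2 < 1/2 + Kc * (b - 1/2) + 2*(1-Kc)*(b - 1/2)^2 := by
  nlinarith [mul_nonneg (mul_nonneg (by linarith : (0:ℝ) ≤ 1-Kc) (by linarith : (0:ℝ) ≤ b - a))
      (by linarith : (0:ℝ) ≤ a + b - 1),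
    mul_pos hK0 (by linarith : (0:ℝ) < b - a)]

private lemma z_props {Kc : ℝ} (hK0 : 0 < Kc) (hK1 : Kc < 1) {v : ℝ → ℝ}
    (hv : ∀ x ∈ Ioc (1/2:ℝ) 1, v x ∈ Ioc (1/2:ℝ) 1 ∧
      1/2 + Kc * (v x - 1/2) + 2*(1-Kc)*(v x - 1/2)^2 = x) :
    StrictMonoOn v (Ioc (1/2) 1) ∧ ContinuousOn v (Ioc (1/2) 1) ∧
      ∀ x ∈ Ioc (1/2:ℝ) 1, x ≤ v x := by
  set φ : ℝ → ℝ := fun t => 1/2 + Kc * (t - 1/2) + 2*(1-Kc)*(t - 1/2)^2 with hφ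
  have hφh : φ (1/2) = 1/2 := by simp [hφ]
  have hφ1 : φ 1 = 1 := by simp only [hφ]; ring
  have hmono : StrictMonoOn v (Ioc (1/2) 1) := by
    intro a ha b hb hab
    by_contra h
    push_neg at h
    have h1 : 1/2 + Kc * (v b - 1/2) + 2*(1-Kc)*(v b - 1/2)^2 ≤
        1/2 + Kc * (v a - 1/2) + 2*(1-Kc)*(v a - 1/2)^2 := by
      rcases eq_or_lt_of_le h with h' | h'
      · rw [h']
      · exact (rb_lt hK0 hK1 (hv b hb).1.1.le h').le
    rw [(hv a ha).2, (hv b hb).2] at h1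
    exact absurd h1 (not_le.2 hab)
  have hv1 : v 1 = 1 := by
    have h := hv 1 ⟨by norm_num, le_refl _⟩
    by_contra hne
    have hlt : v 1 < 1 := lt_of_le_of_ne h.1.2 hne
    have := rb_lt hK0 hK1 h.1.1.le hlt
    rw [h.2] at this
    rw [show (1:ℝ)/2 + Kc * (1 - 1/2) + 2*(1-Kc)*(1 - 1/2)^2 = 1 by ring] at this
    exact absurd this (lt_irrefl 1)
  have hsurj : ∀ t ∈ Ioc (1/2:ℝ) 1, ∃ c ∈ Ioc (1/2:ℝ) 1, v c = t := by
    intro t ht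
    have hc0 : 1/2 < φ t := by
      have := rb_lt hK0 hK1 (le_refl (1/2:ℝ)) ht.1
      rwa [show (1:ℝ)/2 + Kc * (1/2 - 1/2) + 2*(1-Kc)*(1/2 - 1/2)^2 = 1/2 by ring] at this
    have hc1 : φ t ≤ 1 := by
      have := rb_le hK0 hK1 ht.1.le ht.2
      rwa [show (1:ℝ)/2 + Kc * (1 - 1/2) + 2*(1-Kc)*(1 - 1/2)^2 = 1 by ring] at this
    refine ⟨φ t, ⟨hc0, hc1⟩, ?_⟩
    have h := hv (φ t) ⟨hc0, hc1⟩
    rcases lt_trichotomy (v (φ t)) t with h' | h' | h'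
    · have := rb_lt hK0 hK1 h.1.1.le h'
      rw [h.2] at this
      exact absurd this (lt_irrefl _)
    · exact h'
    · have := rb_lt hK0 hK1 ht.1.le h'
      rw [h.2] at this
      exact absurd this (lt_irrefl _)
  have hcont : ContinuousOn v (Ioc (1/2) 1) := by
    intro a ha
    have hright : a < 1 → ContinuousWithinAt v (Ici a) a := by
      intro ha1
      refine hmono.continuousWithinAt_right_of_exists_between
        (Filter.mem_of_superset (Icc_mem_nhdsGE_of_mem ⟨le_refl a, ha1⟩)
          (fun x hx => ⟨lt_of_lt_of_le ha.1 hx.1, hx.2⟩)) ?_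
      intro b hb
      have hva : v a < 1 := by
        have := hmono ha ⟨by norm_num, le_refl (1:ℝ)⟩ ha1
        rwa [hv1] at this
      have hva0 : 1/2 < v a := (hv a ha).1.1
      obtain ⟨c, hc, hvc⟩ := hsurj (min b 1)
        ⟨lt_min (hva0.trans hb) (by norm_num), min_le_right _ _⟩
      exact ⟨c, hc, by rw [hvc]; exact ⟨lt_min hb hva, min_le_left _ _⟩⟩
    have hleft : ContinuousWithinAt v (Iic a) a := by
      refine hmono.continuousWithinAt_left_of_exists_between
        (Filter.mem_of_superset (Ioc_mem_nhdsLE_of_mem ⟨ha.1, le_refl a⟩)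
          (Ioc_subset_Ioc_right ha.2)) ?_
      intro b hb
      have hva0 : 1/2 < v a := (hv a ha).1.1
      have hmid : 1/2 < (1/2 + v a)/2 := by linarith
      have hmid2 : (1/2 + v a)/2 < v a := by linarith
      obtain ⟨c, hc, hvc⟩ := hsurj (max b ((1/2 + v a)/2))
        ⟨lt_of_lt_of_le hmid (le_max_right _ _),
         max_le (hb.le.trans (hv a ha).1.2) (by linarith [(hv a ha).1.2])⟩
      exact ⟨c, hc, by rw [hvc]; exact ⟨le_max_left _ _, max_lt hb hmid2⟩⟩
    by_cases h1 : a < 1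
    · exact (((hright h1).union hleft).mono
        (fun x _ => (le_total a x).imp id id)).mono (fun x _ => trivial)
    · have ha1 : a = 1 := le_antisymm ha.2 (not_lt.1 h1)
      exact hleft.mono (fun x hx => ha1 ▸ hx.2)
  refine ⟨hmono, hcont, ?_⟩
  intro x hx
  have h := hv x hx
  have hu1 : v x - 1/2 ≤ 1/2 := by linarith [h.1.2]
  have hu0 : 0 < v x - 1/2 := by linarith [h.1.1]
  nlinarith [h.2, mul_nonneg (mul_nonneg (by linarith : (0:ℝ) ≤ 1 - Kc) hu0.le)
    (by linarith : (0:ℝ) ≤ 1 - 2*(v x - 1/2))]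

/-- The Perron–Frobenius operator `P` preserves the set `C₀`. -/
theorem PFop_preserves_C0
    (N : ℕ) (hN : 0 < N)
    (α K : Fin N → ℝ) (SR : Finset (Fin N))
    (hSR : SR.Nonempty) (hSS : SRᶜ.Nonempty)
    (hα : ∀ j, 0 < α j)
    (hK : ∀ r ∈ SR, K r ∈ Set.Ioo (0 : ℝ) 1)
    (p : Fin N → ℝ) (hp : ∀ j, 0 < p j) (hp1 : ∑ j, p j = 1)
    (y : Fin N → ℝ → ℝ)
    (hy : ∀ j, ∀ x ∈ Set.Icc (0 : ℝ) 1,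
      y j x ∈ Set.Icc (0 : ℝ) (1 / 2) ∧ lsvLeft (α j) (y j x) = x)
    (zr : Fin N → ℝ → ℝ)
    (hzr : ∀ r ∈ SR, ∀ x ∈ Set.Ioc (1 / 2 : ℝ) 1,
      zr r x ∈ Set.Ioc (1 / 2 : ℝ) 1 ∧
        1 / 2 + K r * (zr r x - 1 / 2) + 2 * (1 - K r) * (zr r x - 1 / 2) ^ 2 = x)
    (f : ℝ → ℝ) (hf : memC0 f) :
    memC0 (PFop SR p α K y zr f) := by
  classical
  obtain ⟨hf0, hfa1, hfc1, hfa2, hfc2, hfi⟩ := hf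
  have hsub1 : Ioc (0:ℝ) (1/2) ⊆ Ioc 0 1 := Ioc_subset_Ioc_right (by norm_num)
  have hsub2 : Ioc (1/2:ℝ) 1 ⊆ Ioc 0 1 := Ioc_subset_Ioc_left (by norm_num)
  have hsubI : Ioc (0:ℝ) 1 ⊆ Icc 0 1 := Ioc_subset_Icc_self
  have hyP := fun j => y_props (hα j) (hy j)
  have ymem : ∀ j, ∀ x ∈ Ioc (0:ℝ) 1, y j x ∈ Ioc (0:ℝ) (1/2) ∧ x / 2 ≤ y j x :=
    fun j => (hyP j).2.2
  have ymem1 : ∀ j, ∀ x ∈ Ioc (0:ℝ) 1, y j x ∈ Ioc (0:ℝ) 1 :=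
    fun j x hx => hsub1 (ymem j x hx).1
  have ymono : ∀ j, ∀ a ∈ Ioc (0:ℝ) 1, ∀ b ∈ Ioc (0:ℝ) 1, a ≤ b → y j a ≤ y j b :=
    fun j a ha b hb hab => (hyP j).1.monotoneOn (hsubI ha) (hsubI hb) hab
  have hD1 : ∀ j, ∀ x ∈ Ioc (0:ℝ) 1, 1 ≤ 1 + (α j + 1) * (2 * y j x) ^ (α j) := by
    intro j x hx
    have h1 : (0:ℝ) ≤ (2 * y j x) ^ (α j) :=
      Real.rpow_nonneg (by linarith [(ymem j x hx).1.1]) _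
    nlinarith [hα j]
  have hDmono : ∀ j, ∀ a ∈ Ioc (0:ℝ) 1, ∀ b ∈ Ioc (0:ℝ) 1, a ≤ b →
      1 + (α j + 1) * (2 * y j a) ^ (α j) ≤ 1 + (α j + 1) * (2 * y j b) ^ (α j) := by
    intro j a ha b hb hab
    have h1 : (2 * y j a) ^ (α j) ≤ (2 * y j b) ^ (α j) :=
      Real.rpow_le_rpow (by linarith [(ymem j a ha).1.1])
        (by linarith [ymono j a ha b hb hab]) (hα j).le
    have h2 := mul_le_mul_of_nonneg_left h1 (by linarith [hα j] : (0:ℝ) ≤ α j + 1)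
    linarith
  have zmem : ∀ x ∈ Ioc (0:ℝ) 1, (x + 1) / 2 ∈ Ioc (1/2:ℝ) 1 := by
    intro x hx
    exact ⟨by linarith [hx.1], by linarith [hx.2]⟩
  have pS0 : 0 ≤ ∑ j ∈ SRᶜ, p j := Finset.sum_nonneg fun j _ => (hp j).le
  have pS1 : ∑ j ∈ SRᶜ, p j ≤ 1 := by
    rw [← hp1]
    exact Finset.sum_le_univ_sum_of_nonneg fun j => (hp j).le
  have hzP : ∀ r ∈ SR, StrictMonoOn (zr r) (Ioc (1/2) 1) ∧
      ContinuousOn (zr r) (Ioc (1/2) 1) ∧ ∀ x ∈ Ioc (1/2:ℝ) 1, x ≤ zr r x :=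
    fun r hr => z_props (hK r hr).1 (hK r hr).2 (hzr r hr)
  have hDR : ∀ r ∈ SR, ∀ x ∈ Ioc (1/2:ℝ) 1,
      0 < K r + 4 * (1 - K r) * (zr r x - 1 / 2) := by
    intro r hr x hx
    obtain ⟨hK0, hK1⟩ := hK r hr
    have h1 := (hzr r hr x hx).1.1
    nlinarith [mul_pos (by linarith : (0:ℝ) < 1 - K r) (by linarith : (0:ℝ) < zr r x - 1/2)]
  -- nonnegativity
  have hP0 : ∀ x ∈ Ioc (0:ℝ) 1, 0 ≤ PFop SR p α K y zr f x := by
    intro x hx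
    have t1 : 0 ≤ ∑ j, p j * (f (y j x) / (1 + (α j + 1) * (2 * y j x) ^ (α j))) :=
      Finset.sum_nonneg fun j _ => mul_nonneg (hp j).le
        (div_nonneg (hf0 _ (ymem1 j x hx)) (by linarith [hD1 j x hx]))
    have t2 : 0 ≤ (∑ j ∈ SRᶜ, p j) * (f ((x + 1) / 2) / 2) :=
      mul_nonneg pS0 (div_nonneg (hf0 _ (hsub2 (zmem x hx))) (by norm_num))
    have t3 : 0 ≤ (if 1 / 2 < x then
        ∑ r ∈ SR, p r * (f (zr r x) / (K r + 4 * (1 - K r) * (zr r x - 1 / 2))) else 0) := by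
      split_ifs with hx2
      · refine Finset.sum_nonneg fun r hr => mul_nonneg (hp r).le (div_nonneg ?_ ?_)
        · exact hf0 _ (hsub2 (hzr r hr x ⟨hx2, hx.2⟩).1)
        · exact (hDR r hr x ⟨hx2, hx.2⟩).le
      · exact le_refl 0
    simp only [PFop]
    exact add_nonneg (add_nonneg t1 t2) t3
  -- antitone building blocks
  have hA : ∀ a ∈ Ioc (0:ℝ) 1, ∀ b ∈ Ioc (0:ℝ) 1, a ≤ b →
      (∑ j, p j * (f (y j b) / (1 + (α j + 1) * (2 * y j b) ^ (α j)))) ≤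
      (∑ j, p j * (f (y j a) / (1 + (α j + 1) * (2 * y j a) ^ (α j)))) := by
    intro a ha b hb hab
    refine Finset.sum_le_sum fun j _ => mul_le_mul_of_nonneg_left ?_ (hp j).le
    refine div_le_div₀ (hf0 _ (ymem1 j a ha)) ?_ ?_ ?_
    · exact hfa1 (ymem j a ha).1 (ymem j b hb).1 (ymono j a ha b hb hab)
    · linarith [hD1 j a ha]
    · exact hDmono j a ha b hb hab
  have hB : ∀ a ∈ Ioc (0:ℝ) 1, ∀ b ∈ Ioc (0:ℝ) 1, a ≤ b →
      (∑ j ∈ SRᶜ, p j) * (f ((b + 1) / 2) / 2) ≤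
      (∑ j ∈ SRᶜ, p j) * (f ((a + 1) / 2) / 2) := by
    intro a ha b hb hab
    refine mul_le_mul_of_nonneg_left ?_ pS0
    have := hfa2 (zmem a ha) (zmem b hb) (by linarith)
    linarith
  have hC : ∀ a ∈ Ioc (1/2:ℝ) 1, ∀ b ∈ Ioc (1/2:ℝ) 1, a ≤ b →
      (∑ r ∈ SR, p r * (f (zr r b) / (K r + 4 * (1 - K r) * (zr r b - 1 / 2)))) ≤
      (∑ r ∈ SR, p r * (f (zr r a) / (K r + 4 * (1 - K r) * (zr r a - 1 / 2)))) := by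
    intro a ha b hb hab
    refine Finset.sum_le_sum fun r hr => mul_le_mul_of_nonneg_left ?_ (hp r).le
    have hza := (hzr r hr a ha).1
    have hzb := (hzr r hr b hb).1
    have hzab : zr r a ≤ zr r b := ((hzP r hr).1.monotoneOn) ha hb hab
    refine div_le_div₀ (hf0 _ (hsub2 hza)) (hfa2 hza hzb hzab) (hDR r hr a ha) ?_
    have h2 : (0:ℝ) ≤ 1 - K r := by linarith [(hK r hr).2]
    nlinarith [mul_nonneg h2 (sub_nonneg.2 hzab)]
  -- antitone on the two pieces
  have hant1 : AntitoneOn (PFop SR p α K y zr f) (Ioc (0:ℝ) (1/2)) := by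
    intro a ha b hb hab
    have ha' := hsub1 ha
    have hb' := hsub1 hb
    simp only [PFop]
    rw [if_neg (not_lt.2 ha.2), if_neg (not_lt.2 hb.2)]
    simp only [add_zero]
    exact add_le_add (hA a ha' b hb' hab) (hB a ha' b hb' hab)
  have hant2 : AntitoneOn (PFop SR p α K y zr f) (Ioc (1/2:ℝ) 1) := by
    intro a ha b hb hab
    have ha' := hsub2 ha
    have hb' := hsub2 hb
    simp only [PFop]
    rw [if_pos ha.1, if_pos hb.1]
    exact add_le_add (add_le_add (hA a ha' b hb' hab) (hB a ha' b hb' hab)) (hC a ha b hb hab)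
  -- continuity building blocks
  have hAcont : ∀ s : Set ℝ, s ⊆ Ioc (0:ℝ) 1 →
      ContinuousOn (fun x => ∑ j, p j *
        (f (y j x) / (1 + (α j + 1) * (2 * y j x) ^ (α j)))) s := by
    intro s hs
    refine continuousOn_finset_sum _ fun j _ => continuousOn_const.mul ?_
    have hyc : ContinuousOn (y j) s := (hyP j).2.1.mono fun x hx => hsubI (hs hx)
    refine ContinuousOn.div ?_ ?_ ?_
    · exact hfc1.comp hyc fun x hx => (ymem j x (hs hx)).1
    · refine continuousOn_const.add (continuousOn_const.mul ?_)
      exact (continuousOn_const.mul hyc).rpow_const fun x hx => Or.inr (hα j).le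
    · intro x hx
      have := hD1 j x (hs hx)
      linarith
  have hBcont : ∀ s : Set ℝ, s ⊆ Ioc (0:ℝ) 1 →
      ContinuousOn (fun x => (∑ j ∈ SRᶜ, p j) * (f ((x + 1) / 2) / 2)) s := by
    intro s hs
    refine continuousOn_const.mul (ContinuousOn.div_const ?_ 2)
    refine hfc2.comp ?_ fun x hx => zmem x (hs hx)
    exact (continuousOn_id.add continuousOn_const).div_const 2
  have hcont1 : ContinuousOn (PFop SR p α K y zr f) (Ioc (0:ℝ) (1/2)) := by
    refine ((hAcont _ hsub1).add (hBcont _ hsub1)).congr fun x hx => ?_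
    simp only [PFop, if_neg (not_lt.2 hx.2), add_zero]
    rfl
  have hcont2 : ContinuousOn (PFop SR p α K y zr f) (Ioc (1/2:ℝ) 1) := by
    have hCcont : ContinuousOn (fun x => ∑ r ∈ SR, p r *
        (f (zr r x) / (K r + 4 * (1 - K r) * (zr r x - 1 / 2)))) (Ioc (1/2:ℝ) 1) := by
      refine continuousOn_finset_sum _ fun r hr => continuousOn_const.mul ?_
      have hzc := (hzP r hr).2.1
      refine ContinuousOn.div (hfc2.comp hzc fun x hx => (hzr r hr x hx).1)
        (continuousOn_const.add (continuousOn_const.mul (hzc.sub continuousOn_const)))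
        fun x hx => (hDR r hr x hx).ne'
    refine (((hAcont _ hsub2).add (hBcont _ hsub2)).add hCcont).congr fun x hx => ?_
    simp only [PFop, if_pos hx.1]
    rfl
  -- integrability
  have hint : IntegrableOn (PFop SR p α K y zr f) (Ioc (0:ℝ) 1) := by
    have hmeas : AEStronglyMeasurable (PFop SR p α K y zr f)
        (volume.restrict (Ioc (0:ℝ) 1)) := by
      have hU : Ioc (0:ℝ) 1 = Ioc 0 (1/2) ∪ Ioc (1/2) 1 :=
        (Ioc_union_Ioc_eq_Ioc (by norm_num) (by norm_num)).symm
      rw [hU]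
      exact (aemeasurable_union_iff.2
        ⟨aemeasurable_restrict_of_antitoneOn measurableSet_Ioc hant1,
         aemeasurable_restrict_of_antitoneOn measurableSet_Ioc hant2⟩).aestronglyMeasurable
    set h : ℝ → ℝ := (Ioc (0:ℝ) 1).indicator f with hh_def
    have hh : Integrable h := (integrable_indicator_iff measurableSet_Ioc).2 hfi
    have hh0 : ∀ t, 0 ≤ h t := fun t => Set.indicator_nonneg (fun a ha => hf0 a ha) t
    set C0 : ℝ := ∑ r ∈ SR, p r / K r with hC0_def
    have hC0 : 0 ≤ C0 := Finset.sum_nonneg fun r hr => div_nonneg (hp r).le (hK r hr).1.le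
    have hg1 : Integrable (fun x : ℝ => h ((1/2) * x)) := hh.comp_mul_left' (by norm_num)
    have hg2 : Integrable (fun x : ℝ => h ((1/2) * x + 1/2)) := by
      have := Integrable.comp_mul_left' (hh.comp_add_right (1/2)) (R := (1/2:ℝ)) (by norm_num)
      simpa using this
    have hG : Integrable (fun x : ℝ => h ((1/2) * x) + h ((1/2) * x + 1/2) + C0 * h x) :=
      (hg1.add hg2).add (hh.const_mul C0)
    refine Integrable.mono' hG.integrableOn hmeas ?_
    refine ae_restrict_of_forall_mem measurableSet_Ioc fun x hx => ?_
    rw [Real.norm_of_nonneg (hP0 x hx)]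
    have hx2 : x / 2 ∈ Ioc (0:ℝ) (1/2) := ⟨by linarith [hx.1], by linarith [hx.2]⟩
    have tA : (∑ j, p j * (f (y j x) / (1 + (α j + 1) * (2 * y j x) ^ (α j)))) ≤ f (x/2) := by
      calc (∑ j, p j * (f (y j x) / (1 + (α j + 1) * (2 * y j x) ^ (α j))))
          ≤ ∑ j, p j * f (x/2) := by
            refine Finset.sum_le_sum fun j _ => mul_le_mul_of_nonneg_left ?_ (hp j).le
            exact le_trans (div_le_self (hf0 _ (ymem1 j x hx)) (hD1 j x hx))
              (hfa1 hx2 (ymem j x hx).1 (ymem j x hx).2)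
        _ = f (x/2) := by rw [← Finset.sum_mul, hp1, one_mul]
    have hfz0 : 0 ≤ f ((x + 1) / 2) := hf0 _ (hsub2 (zmem x hx))
    have tB : (∑ j ∈ SRᶜ, p j) * (f ((x + 1) / 2) / 2) ≤ f ((x + 1) / 2) := by
      have h1 : (∑ j ∈ SRᶜ, p j) * (f ((x + 1) / 2) / 2) ≤ 1 * (f ((x + 1) / 2) / 2) :=
        mul_le_mul_of_nonneg_right pS1 (div_nonneg hfz0 (by norm_num))
      linarith
    have tC : (if 1 / 2 < x then
        ∑ r ∈ SR, p r * (f (zr r x) / (K r + 4 * (1 - K r) * (zr r x - 1 / 2))) else 0)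
        ≤ C0 * f x := by
      split_ifs with hx3
      · have hxm : x ∈ Ioc (1/2:ℝ) 1 := ⟨hx3, hx.2⟩
        calc (∑ r ∈ SR, p r * (f (zr r x) / (K r + 4 * (1 - K r) * (zr r x - 1 / 2))))
            ≤ ∑ r ∈ SR, p r / K r * f x := by
              refine Finset.sum_le_sum fun r hr => ?_
              have hz := (hzr r hr x hxm).1
              have hKle : K r ≤ K r + 4 * (1 - K r) * (zr r x - 1 / 2) := by
                nlinarith [(hK r hr).2, hz.1,
                  mul_nonneg (by linarith [(hK r hr).2] : (0:ℝ) ≤ 1 - K r)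
                    (by linarith [hz.1] : (0:ℝ) ≤ zr r x - 1/2)]
              have hdiv := div_le_div₀ (hf0 x (hsub2 hxm))
                (hfa2 hxm hz ((hzP r hr).2.2 x hxm)) (hK r hr).1 hKle
              calc p r * (f (zr r x) / (K r + 4 * (1 - K r) * (zr r x - 1 / 2)))
                  ≤ p r * (f x / K r) := mul_le_mul_of_nonneg_left hdiv (hp r).le
                _ = p r / K r * f x := by ring
          _ = C0 * f x := by rw [hC0_def, ← Finset.sum_mul]
      · exact mul_nonneg hC0 (hf0 x hx)
    have hmem1 : (1/2:ℝ) * x ∈ Ioc (0:ℝ) 1 :=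
      ⟨by linarith [hx.1], by linarith [hx.2]⟩
    have hmem2 : (1/2:ℝ) * x + 1/2 ∈ Ioc (0:ℝ) 1 :=
      ⟨by linarith [hx.1], by linarith [hx.2]⟩
    have e1 : h ((1/2) * x) = f (x/2) := by
      rw [hh_def, Set.indicator_of_mem hmem1]
      congr 1
      ring
    have e2 : h ((1/2) * x + 1/2) = f ((x + 1) / 2) := by
      rw [hh_def, Set.indicator_of_mem hmem2]
      congr 1
      ring
    have e3 : h x = f x := by rw [hh_def, Set.indicator_of_mem hx]
    rw [e1, e2, e3]
    simp only [PFop]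
    exact add_le_add (add_le_add tA tB) tC
  exact ⟨hP0, hant1, hcont1, hant2, hcont2, hint⟩
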